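/- arXiv:2108.09185 — 7 statements merged into one kernel-verified Lean document; each statement's English description precedes it below -/
import Mathlib

section
/- Let H be a Hilbert space and T₁, …, T_d ∈ B(H) bounded operators. Then the following are equivalent: (1) each Tᵢ is injective and the ranges of the Tᵢ are linearly independent subspaces (i.e., if vᵢ ∈ ran(Tᵢ) with v₁ + ⋯ + v_d = 0 then all vᵢ = 0); (2) the only solution in operators W₁, …, W_d ∈ B(H) to T₁W₁ + ⋯ + T_dW_d = 0 is W₁ = ⋯ = W_d = 0. -/
open ContinuousLinearMap

section AddGroup

variable {ι M N F : Type*} [Fintype ι] [AddCommGroup M] [AddCommGroup N]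
  [FunLike F M N] [AddMonoidHomClass F M N]

theorem injective_and_ranges_independent_iff (f : ι → F) :
    ((∀ i, Function.Injective (f i)) ∧
      (∀ v : ι → N, (∀ i, v i ∈ Set.range (f i)) → ∑ i, v i = 0 → ∀ i, v i = 0)) ↔
    ∀ u : ι → M, ∑ i, f i (u i) = 0 → ∀ i, u i = 0 := by
  classical
  constructor
  · rintro ⟨hinj, hind⟩ u hu i
    have hfu : f i (u i) = 0 := hind (fun j => f j (u j)) (fun j => ⟨u j, rfl⟩) hu i
    exact hinj i (by rwa [map_zero])
  · intro h
    refine ⟨fun i => (injective_iff_map_eq_zero (f i)).2 fun x hx => ?_, ?_⟩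
    · have hsingle : ∑ j, f j (Pi.single (M := fun _ => M) i x j) = 0 := by
        rw [Fintype.sum_eq_single i fun j hj => by simp [hj]]
        simpa using hx
      simpa using h (Pi.single i x) hsingle i
    · intro v hv hsum i
      choose u hu using hv
      have hu0 := h u (by simpa only [hu] using hsum) i
      rw [← hu, hu0, map_zero]

end AddGroup

section InnerProductSpace

variable {ι 𝕜 E F : Type*} [Fintype ι] [RCLike 𝕜] [NormedAddCommGroup E]
  [InnerProductSpace 𝕜 E] [NormedAddCommGroup F] [NormedSpace 𝕜 F]

open InnerProductSpace in
/-- A vector solution `u` with `uᵢ ≠ 0` gives the operator solution `Wⱼ = ⟪uᵢ, ·⟫ uⱼ`,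
with `Wᵢ uᵢ = ‖uᵢ‖² uᵢ ≠ 0`. -/
theorem forall_sum_apply_eq_zero_iff_forall_sum_comp_eq_zero (T : ι → E →L[𝕜] F) :
    (∀ u : ι → E, ∑ i, T i (u i) = 0 → ∀ i, u i = 0) ↔
    ∀ W : ι → E →L[𝕜] E, ∑ i, T i ∘L W i = 0 → ∀ i, W i = 0 := by
  constructor
  · intro h W hW i
    ext x
    exact h (fun j => W j x) (by simpa using congr($hW x)) i
  · intro h u hu i
    by_contra hui
    have hW : ∑ j, T j ∘L rankOne 𝕜 (u j) (u i) = 0 := by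
      simp only [comp_rankOne, ← sum_apply, ← map_sum, hu, map_zero, zero_apply]
    simpa [hui] using h _ hW i

end InnerProductSpace

theorem stmt_0_general {H : Type*} [NormedAddCommGroup H] [InnerProductSpace ℂ H]
    (d : ℕ) (T : Fin d → H →L[ℂ] H) :
    ((∀ i, Function.Injective (T i)) ∧
      (∀ v : Fin d → H, (∀ i, v i ∈ Set.range (T i)) → ∑ i, v i = 0 → ∀ i, v i = 0))
    ↔
    (∀ W : Fin d → H →L[ℂ] H, ∑ i, (T i) ∘L (W i) = 0 → ∀ i, W i = 0) := by
  rw [injective_and_ranges_independent_iff]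
  exact forall_sum_apply_eq_zero_iff_forall_sum_comp_eq_zero T

/-- Lemma 2.7: each `Tᵢ` injective with linearly independent ranges iff the only
operator solution of `∑ Tᵢ Wᵢ = 0` is `Wᵢ = 0` for all `i`. -/
theorem stmt_0 {H : Type*} [NormedAddCommGroup H] [InnerProductSpace ℂ H]
    [CompleteSpace H] (d : ℕ) (T : Fin d → H →L[ℂ] H) :
    ((∀ i, Function.Injective (T i)) ∧
      (∀ v : Fin d → H, (∀ i, v i ∈ Set.range (T i)) → ∑ i, v i = 0 → ∀ i, v i = 0))
    ↔
    (∀ W : Fin d → H →L[ℂ] H, ∑ i, (T i) ∘L (W i) = 0 → ∀ i, W i = 0) :=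
  stmt_0_general d T
end

section
/- Let d ≥ 1, g ≥ 0, and suppose T₁, …, T_d, X₁, …, X_g are bounded operators on a Hilbert space H with each Xⱼ self-adjoint, such that: (1) Σᵢ TᵢTᵢ* + Σⱼ Xⱼ² = I; (2) each Tᵢ is injective; (3) the only operators W₁, …, W_d with Σᵢ TᵢWᵢ = 0 are all zero. If (S₁, …, S_d, Y₁, …, Y_g) are operators on H ⊕ K of block form Sᵢ = [[Tᵢ, Aᵢ],[Bᵢ, Cᵢ]] and Yⱼ = [[Xⱼ, Zⱼ],[Zⱼ*, Wⱼ]] with each Yⱼ self-adjoint, satisfying Σᵢ SᵢSᵢ* + Σⱼ Yⱼ² ≤ I, then all Aᵢ = 0, all Bᵢ = 0, and all Zⱼ = 0 (the dilation is a direct sum). -/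
open ContinuousLinearMap

variable {H K : Type*} [NormedAddCommGroup H] [InnerProductSpace ℂ H]
  [NormedAddCommGroup K] [InnerProductSpace ℂ K]

/-- The block operator `[[A, B], [C, D]]` on the Hilbert space direct sum `H ⊕ K`. -/
noncomputable def blockOp (A : H →L[ℂ] H) (B : K →L[ℂ] H) (C : H →L[ℂ] K) (D : K →L[ℂ] K) :
    WithLp 2 (H × K) →L[ℂ] WithLp 2 (H × K) :=
  ((WithLp.prodContinuousLinearEquiv 2 ℂ H K).symm : H × K →L[ℂ] WithLp 2 (H × K)) ∘L
    ((A ∘L ContinuousLinearMap.fst ℂ H K + B ∘L ContinuousLinearMap.snd ℂ H K).prod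
      (C ∘L ContinuousLinearMap.fst ℂ H K + D ∘L ContinuousLinearMap.snd ℂ H K)) ∘L
    ((WithLp.prodContinuousLinearEquiv 2 ℂ H K : WithLp 2 (H × K) ≃L[ℂ] H × K) :
      WithLp 2 (H × K) →L[ℂ] H × K)

/-!
Write `M = 1 - (∑ Sᵢ Sᵢ* + ∑ Yⱼ²)` as a block operator. By (1) its `H`-corner is
`-(∑ Aᵢ Aᵢ* + ∑ Zⱼ Zⱼ*)`, minus a positive operator, so positivity of `M` makes it vanish, whence
`Aᵢ = 0` and `Zⱼ = 0`. A positive operator with a vanishing diagonal corner has vanishing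
off-diagonal blocks; here the lower-left block is `-∑ Bᵢ Tᵢ*`, so `∑ Tᵢ Bᵢ* = 0`. Applying (3) to
`Wᵢ = Bᵢ* R` for every `R : H → K` then gives `Bᵢ* = 0`.
-/

section General

variable {𝕜 E F : Type*} [RCLike 𝕜] [NormedAddCommGroup E] [InnerProductSpace 𝕜 E]
  [NormedAddCommGroup F] [InnerProductSpace 𝕜 F]

-- Test against the rank-one operator `x ↦ ⟪V y, x⟫ • y`, which sends `V y` to `‖V y‖² • y`.
lemma ContinuousLinearMap.eq_zero_of_forall_comp_eq_zero {V : F →L[𝕜] E}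
    (hV : ∀ R : E →L[𝕜] F, V ∘L R = 0) : V = 0 := by
  ext y
  have h := congr($(hV ((innerSL 𝕜 (V y)).smulRight y)) (V y))
  simp only [comp_apply, smulRight_apply, innerSL_apply_apply, map_smul, zero_apply,
    smul_eq_zero, inner_self_eq_zero, or_self] at h
  simpa using h

lemma ContinuousLinearMap.eq_zero_of_sum_comp_eq_zero {ι : Type*} [Fintype ι]
    {T : ι → E →L[𝕜] E} (hT : ∀ W : ι → E →L[𝕜] E, ∑ i, T i ∘L W i = 0 → ∀ i, W i = 0)
    {V : ι → F →L[𝕜] E} (hV : ∑ i, T i ∘L V i = 0) (i : ι) : V i = 0 :=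
  eq_zero_of_forall_comp_eq_zero fun R => hT (fun i => V i ∘L R) (by
    ext x
    simpa [sum_apply] using congr($hV (R x))) i

lemma ContinuousLinearMap.self_comp_adjoint_eq_zero_iff [CompleteSpace E] [CompleteSpace F]
    {A : F →L[𝕜] E} : A ∘L adjoint A = 0 ↔ A = 0 := by
  simpa using adjoint_comp_self_eq_zero_iff (A := adjoint A)

end General

section Loewner

variable {E F : Type*} [NormedAddCommGroup E] [InnerProductSpace ℂ E] [CompleteSpace E]
  [NormedAddCommGroup F] [InnerProductSpace ℂ F] [CompleteSpace F]

-- `T = √T ∘ √T` with `√T` self-adjoint, so `⟪T x, x⟫ = ‖√T x‖²`.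
lemma ContinuousLinearMap.IsPositive.apply_eq_zero_of_inner_eq_zero {T : E →L[ℂ] E}
    (hT : T.IsPositive) {x : E} (hx : inner ℂ (T x) x = 0) : T x = 0 := by
  have hsa : IsSelfAdjoint (CFC.sqrt T) := (CFC.sqrt_nonneg T).isSelfAdjoint
  have hsq : CFC.sqrt T ∘L CFC.sqrt T = T :=
    CFC.sqrt_mul_sqrt_self T ((nonneg_iff_isPositive T).mpr hT)
  have hx' : CFC.sqrt T x = 0 := by
    rw [← inner_self_eq_zero (𝕜 := ℂ), ← adjoint_inner_left, hsa.adjoint_eq, ← comp_apply, hsq,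
      hx]
  rw [← hsq, comp_apply, hx', map_zero]

lemma ContinuousLinearMap.sum_self_comp_adjoint_nonneg {ι : Type*} [Fintype ι]
    (A : ι → F →L[ℂ] E) : 0 ≤ ∑ i, A i ∘L adjoint (A i) :=
  Finset.sum_nonneg fun _ _ => (nonneg_iff_isPositive _).mpr (isPositive_self_comp_adjoint _)

lemma ContinuousLinearMap.sum_self_comp_adjoint_eq_zero_iff {ι : Type*} [Fintype ι]
    (A : ι → F →L[ℂ] E) : ∑ i, A i ∘L adjoint (A i) = 0 ↔ ∀ i, A i = 0 := by
  rw [Finset.sum_eq_zero_iff_of_nonneg fun i _ =>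
    (nonneg_iff_isPositive _).mpr (isPositive_self_comp_adjoint (A i))]
  simp [self_comp_adjoint_eq_zero_iff]

end Loewner

section BlockOp

@[simp] lemma blockOp_apply (A : H →L[ℂ] H) (B : K →L[ℂ] H) (C : H →L[ℂ] K) (D : K →L[ℂ] K)
    (x : H × K) :
    blockOp A B C D (WithLp.toLp 2 x) = WithLp.toLp 2 (A x.1 + B x.2, C x.1 + D x.2) := rfl

lemma blockOp_ext {M N : WithLp 2 (H × K) →L[ℂ] WithLp 2 (H × K)}
    (h : ∀ x : H × K, M (WithLp.toLp 2 x) = N (WithLp.toLp 2 x)) : M = N := by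
  ext x
  simpa using h x.ofLp

lemma one_eq_blockOp : (1 : WithLp 2 (H × K) →L[ℂ] WithLp 2 (H × K)) = blockOp 1 0 0 1 :=
  blockOp_ext fun x => by simp

lemma blockOp_add (A A' : H →L[ℂ] H) (B B' : K →L[ℂ] H) (C C' : H →L[ℂ] K)
    (D D' : K →L[ℂ] K) :
    blockOp A B C D + blockOp A' B' C' D' = blockOp (A + A') (B + B') (C + C') (D + D') :=
  blockOp_ext fun x => by
    simp only [add_apply, blockOp_apply, ← WithLp.toLp_add, Prod.mk_add_mk]
    congr 2 <;> abel

lemma blockOp_sub (A A' : H →L[ℂ] H) (B B' : K →L[ℂ] H) (C C' : H →L[ℂ] K)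
    (D D' : K →L[ℂ] K) :
    blockOp A B C D - blockOp A' B' C' D' = blockOp (A - A') (B - B') (C - C') (D - D') :=
  blockOp_ext fun x => by
    simp only [sub_apply, blockOp_apply, ← WithLp.toLp_sub, Prod.mk_sub_mk]
    congr 2 <;> abel

lemma sum_blockOp {ι : Type*} (s : Finset ι) (A : ι → H →L[ℂ] H) (B : ι → K →L[ℂ] H)
    (C : ι → H →L[ℂ] K) (D : ι → K →L[ℂ] K) :
    ∑ i ∈ s, blockOp (A i) (B i) (C i) (D i) =
      blockOp (∑ i ∈ s, A i) (∑ i ∈ s, B i) (∑ i ∈ s, C i) (∑ i ∈ s, D i) := by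
  classical
  induction s using Finset.induction_on with
  | empty => exact blockOp_ext fun x => by simp [← WithLp.toLp_zero, Prod.zero_eq_mk]
  | insert a s ha ih => simp only [Finset.sum_insert ha, ih, blockOp_add]

lemma blockOp_comp (A A' : H →L[ℂ] H) (B B' : K →L[ℂ] H) (C C' : H →L[ℂ] K)
    (D D' : K →L[ℂ] K) :
    blockOp A B C D ∘L blockOp A' B' C' D' =
      blockOp (A ∘L A' + B ∘L C') (A ∘L B' + B ∘L D') (C ∘L A' + D ∘L C')
        (C ∘L B' + D ∘L D') :=
  blockOp_ext fun x => by
    simp only [comp_apply, blockOp_apply, add_apply, map_add]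
    congr 2 <;> abel

lemma adjoint_blockOp [CompleteSpace H] [CompleteSpace K] (A : H →L[ℂ] H) (B : K →L[ℂ] H)
    (C : H →L[ℂ] K) (D : K →L[ℂ] K) :
    adjoint (blockOp A B C D) = blockOp (adjoint A) (adjoint C) (adjoint B) (adjoint D) := by
  symm
  refine (eq_adjoint_iff _ _).mpr ?_
  rintro ⟨x⟩ ⟨y⟩
  simp only [blockOp_apply, WithLp.prod_inner_apply, inner_add_left, inner_add_right,
    adjoint_inner_left]
  ring

lemma inner_blockOp_toLp_zero (A : H →L[ℂ] H) (B : K →L[ℂ] H) (C : H →L[ℂ] K)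
    (D : K →L[ℂ] K) (h : H) :
    inner ℂ (blockOp A B C D (WithLp.toLp 2 (h, 0))) (WithLp.toLp 2 (h, 0)) =
      inner ℂ (A h) h := by
  simp [WithLp.prod_inner_apply]

lemma ContinuousLinearMap.IsPositive.of_blockOp {A : H →L[ℂ] H} {B : K →L[ℂ] H}
    {C : H →L[ℂ] K} {D : K →L[ℂ] K} (hM : (blockOp A B C D).IsPositive) : A.IsPositive := by
  rw [isPositive_iff_complex] at hM ⊢
  intro h
  simpa only [inner_blockOp_toLp_zero] using hM (WithLp.toLp 2 (h, 0))

lemma ContinuousLinearMap.IsPositive.blockOp_lowerLeft_eq_zero [CompleteSpace H] [CompleteSpace K]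
    {A : H →L[ℂ] H} {B : K →L[ℂ] H} {C : H →L[ℂ] K} {D : K →L[ℂ] K}
    (hM : (blockOp A B C D).IsPositive) (hA : A = 0) : C = 0 := by
  ext h
  have := hM.apply_eq_zero_of_inner_eq_zero (x := WithLp.toLp 2 (h, 0))
    (by rw [inner_blockOp_toLp_zero, hA, zero_apply, inner_zero_left])
  simpa using congr(($this).snd)

lemma sum_blockOp_comp_adjoint_add_sum_blockOp_sq [CompleteSpace H] [CompleteSpace K]
    {d g : ℕ} (T : Fin d → H →L[ℂ] H) (A : Fin d → K →L[ℂ] H) (B : Fin d → H →L[ℂ] K)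
    (C : Fin d → K →L[ℂ] K) (X : Fin g → H →L[ℂ] H) (Z : Fin g → K →L[ℂ] H)
    (W : Fin g → K →L[ℂ] K) :
    ∑ i, blockOp (T i) (A i) (B i) (C i) ∘L adjoint (blockOp (T i) (A i) (B i) (C i)) +
        ∑ j, blockOp (X j) (Z j) (adjoint (Z j)) (W j) ∘L
          blockOp (X j) (Z j) (adjoint (Z j)) (W j) =
      blockOp (∑ i, (T i ∘L adjoint (T i) + A i ∘L adjoint (A i)) +
          ∑ j, (X j ∘L X j + Z j ∘L adjoint (Z j)))
        (∑ i, (T i ∘L adjoint (B i) + A i ∘L adjoint (C i)) + ∑ j, (X j ∘L Z j + Z j ∘L W j))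
        (∑ i, (B i ∘L adjoint (T i) + C i ∘L adjoint (A i)) +
          ∑ j, (adjoint (Z j) ∘L X j + W j ∘L adjoint (Z j)))
        (∑ i, (B i ∘L adjoint (B i) + C i ∘L adjoint (C i)) +
          ∑ j, (adjoint (Z j) ∘L Z j + W j ∘L W j)) := by
  simp only [adjoint_blockOp, blockOp_comp, sum_blockOp, blockOp_add]

end BlockOp

theorem stmt_3_general [CompleteSpace H] [CompleteSpace K] (d g : ℕ)
    (T : Fin d → H →L[ℂ] H) (X : Fin g → H →L[ℂ] H)
    (h1 : ∑ i, (T i) ∘L adjoint (T i) + ∑ j, (X j) ∘L (X j) = 1)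
    (h3 : ∀ W : Fin d → H →L[ℂ] H, ∑ i, (T i) ∘L (W i) = 0 → ∀ i, W i = 0)
    (A : Fin d → K →L[ℂ] H) (B : Fin d → H →L[ℂ] K) (C : Fin d → K →L[ℂ] K)
    (Z : Fin g → K →L[ℂ] H) (W : Fin g → K →L[ℂ] K)
    (S : Fin d → WithLp 2 (H × K) →L[ℂ] WithLp 2 (H × K))
    (Y : Fin g → WithLp 2 (H × K) →L[ℂ] WithLp 2 (H × K))
    (hS : ∀ i, S i = blockOp (T i) (A i) (B i) (C i))
    (hY : ∀ j, Y j = blockOp (X j) (Z j) (adjoint (Z j)) (W j))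
    (hcontr : (1 - (∑ i, (S i) ∘L adjoint (S i) + ∑ j, (Y j) ∘L (Y j))).IsPositive) :
    (∀ i, A i = 0) ∧ (∀ i, B i = 0) ∧ (∀ j, Z j = 0) := by
  simp only [hS, hY, sum_blockOp_comp_adjoint_add_sum_blockOp_sq, one_eq_blockOp, blockOp_sub]
    at hcontr
  have hcorner : 1 - (∑ i, (T i ∘L adjoint (T i) + A i ∘L adjoint (A i)) +
      ∑ j, (X j ∘L X j + Z j ∘L adjoint (Z j))) =
      0 - (∑ i, A i ∘L adjoint (A i) + ∑ j, Z j ∘L adjoint (Z j)) := by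
    rw [Finset.sum_add_distrib, Finset.sum_add_distrib, ← h1]
    abel
  have hA0 := sum_self_comp_adjoint_nonneg A
  have hZ0 := sum_self_comp_adjoint_nonneg Z
  have hAZ : ∑ i, A i ∘L adjoint (A i) + ∑ j, Z j ∘L adjoint (Z j) ≤ 0 := by
    rw [le_def, ← hcorner]
    exact hcontr.of_blockOp
  obtain ⟨hA, hZ⟩ := (add_eq_zero_iff_of_nonneg hA0 hZ0).mp (le_antisymm hAZ (add_nonneg hA0 hZ0))
  rw [sum_self_comp_adjoint_eq_zero_iff] at hA hZ
  obtain rfl : A = 0 := funext hA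
  obtain rfl : Z = 0 := funext hZ
  have hBT := hcontr.blockOp_lowerLeft_eq_zero (by simp [h1])
  have hTB : ∑ i, T i ∘L adjoint (B i) = 0 := by
    simpa [map_sum, adjoint_comp] using congr(adjoint $hBT)
  refine ⟨fun _ => rfl, fun i => ?_, fun _ => rfl⟩
  simpa using eq_zero_of_sum_comp_eq_zero h3 hTB i

/-- Theorem 2.8 ('if' direction): the conditions (1)–(3) force any dilation of
`(T₁, …, T_d, X₁, …, X_g)` in the mixed ball `D^{d,g}` to be a direct sum. -/
theorem stmt_3 [CompleteSpace H] [CompleteSpace K] (d g : ℕ) (hd : 1 ≤ d)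
    (T : Fin d → H →L[ℂ] H) (X : Fin g → H →L[ℂ] H)
    (hXsa : ∀ j, IsSelfAdjoint (X j))
    (h1 : ∑ i, (T i) ∘L adjoint (T i) + ∑ j, (X j) ∘L (X j) = 1)
    (h2 : ∀ i, Function.Injective (T i))
    (h3 : ∀ W : Fin d → H →L[ℂ] H, ∑ i, (T i) ∘L (W i) = 0 → ∀ i, W i = 0)
    (A : Fin d → K →L[ℂ] H) (B : Fin d → H →L[ℂ] K) (C : Fin d → K →L[ℂ] K)
    (Z : Fin g → K →L[ℂ] H) (W : Fin g → K →L[ℂ] K)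
    (hWsa : ∀ j, IsSelfAdjoint (W j))
    (S : Fin d → WithLp 2 (H × K) →L[ℂ] WithLp 2 (H × K))
    (Y : Fin g → WithLp 2 (H × K) →L[ℂ] WithLp 2 (H × K))
    (hS : ∀ i, S i = blockOp (T i) (A i) (B i) (C i))
    (hY : ∀ j, Y j = blockOp (X j) (Z j) (adjoint (Z j)) (W j))
    (hcontr : (1 - (∑ i, (S i) ∘L adjoint (S i) + ∑ j, (Y j) ∘L (Y j))).IsPositive) :
    (∀ i, A i = 0) ∧ (∀ i, B i = 0) ∧ (∀ j, Z j = 0) :=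
  stmt_3_general d g T X h1 h3 A B C Z W S Y hS hY hcontr
end

section
/- Let g ≥ 1 and fix 0 < ε < 1. Let (T, X₁, …, X_g) be n×n complex matrices with each Xₖ self-adjoint, T invertible, and TT* + Σₖ Xₖ² ≤ (1 − ε)I. Write TT* + Σₖ Xₖ² = I − AA* for some matrix A. Let C be a positive invertible n×n matrix with norm small enough that B* := −T⁻¹AC* satisfies BB* + CC* ≤ I. Set S = [[T, A],[B, C]] (2n×2n), Y₁ = [[X₁, 0],[0, D]] with D = (I − BB* − CC*)^{1/2}, and Yₖ = [[Xₖ, 0],[0, 0]] for k ≥ 2. Then S is invertible, each Yₖ is self-adjoint, and SS* + Σₖ Yₖ² = I. -/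
open Matrix
open scoped ComplexOrder

/-!
Since `T B* + A C* = 0`, the two block rows of `S` are orthogonal and `S S*` is block diagonal with
blocks `T T* + A A*` and `B B* + C C*`. Both are positive definite because `T` and `C` are
invertible, so `S` is invertible; and the choice of `A` and `D` makes the two diagonal blocks of
`S S* + ∑ Yₖ²` equal to the identity.
-/

namespace Matrix

variable {k l m n α : Type*}

theorem fromBlocks_mul_conjTranspose_self_of_orthogonal [Fintype k] [Fintype l]
    [NonUnitalNonAssocSemiring α] [StarRing α]
    {T : Matrix m k α} {A : Matrix m l α} {B : Matrix n k α} {C : Matrix n l α}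
    (h : T * Bᴴ + A * Cᴴ = 0) :
    fromBlocks T A B C * (fromBlocks T A B C)ᴴ
      = fromBlocks (T * Tᴴ + A * Aᴴ) 0 0 (B * Bᴴ + C * Cᴴ) := by
  have h' : B * Tᴴ + C * Aᴴ = 0 := by
    simpa only [conjTranspose_add, conjTranspose_mul, conjTranspose_conjTranspose,
      conjTranspose_zero, add_comm] using congrArg conjTranspose h
  rw [fromBlocks_conjTranspose, fromBlocks_multiply, h, h']

theorem sum_fromBlocks {ι : Type*} [AddCommMonoid α] (s : Finset ι) (P : ι → Matrix l l α)
    (Q : ι → Matrix l m α) (R : ι → Matrix m l α) (U : ι → Matrix m m α) :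
    ∑ i ∈ s, fromBlocks (P i) (Q i) (R i) (U i)
      = fromBlocks (∑ i ∈ s, P i) (∑ i ∈ s, Q i) (∑ i ∈ s, R i) (∑ i ∈ s, U i) := by
  ext (i | i) (j | j) <;> simp [sum_apply]

theorem posDef_mul_conjTranspose_self_add {K : Type*} [Field K] [PartialOrder K] [StarRing K]
    [StarOrderedRing K] [Fintype m] [DecidableEq m] [Fintype n] {T : Matrix m m K}
    (hT : IsUnit T) (A : Matrix m n K) : (T * Tᴴ + A * Aᴴ).PosDef :=
  (PosDef.mul_conjTranspose_self T (vecMul_injective_iff_isUnit.mpr hT)).add_posSemidef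
    (posSemidef_self_mul_conjTranspose A)

theorem isUnit_fromBlocks_of_orthogonal {K : Type*} [Field K] [PartialOrder K] [StarRing K]
    [StarOrderedRing K] [Fintype m] [DecidableEq m] [Fintype n] [DecidableEq n]
    {T : Matrix m m K} {A : Matrix m n K} {B : Matrix n m K} {C : Matrix n n K}
    (hT : IsUnit T) (hC : IsUnit C) (h : T * Bᴴ + A * Cᴴ = 0) :
    IsUnit (fromBlocks T A B C) := by
  refine isUnit_of_mul_isUnit_left (y := (fromBlocks T A B C)ᴴ) ?_
  rw [fromBlocks_mul_conjTranspose_self_of_orthogonal h, isUnit_fromBlocks_zero₁₂,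
    add_comm (B * _)]
  exact ⟨(posDef_mul_conjTranspose_self_add hT A).isUnit,
    (posDef_mul_conjTranspose_self_add hC B).isUnit⟩

end Matrix

theorem stmt_7_general (n g : ℕ) (hg : 1 ≤ g)
    (T : Matrix (Fin n) (Fin n) ℂ) (X : Fin g → Matrix (Fin n) (Fin n) ℂ)
    (hXsa : ∀ k, (X k).IsHermitian) (hT : IsUnit T)
    (A : Matrix (Fin n) (Fin n) ℂ)
    (hA : T * Tᴴ + ∑ k, X k * X k = 1 - A * Aᴴ)
    (C : Matrix (Fin n) (Fin n) ℂ) (hC : C.PosDef)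
    (B : Matrix (Fin n) (Fin n) ℂ) (hB : Bᴴ = -(T⁻¹ * A * Cᴴ))
    (D : Matrix (Fin n) (Fin n) ℂ) (hD : D.PosSemidef)
    (hDsq : D * D = 1 - (B * Bᴴ + C * Cᴴ))
    (S : Matrix (Fin n ⊕ Fin n) (Fin n ⊕ Fin n) ℂ)
    (hS : S = fromBlocks T A B C)
    (Y : Fin g → Matrix (Fin n ⊕ Fin n) (Fin n ⊕ Fin n) ℂ)
    (hY : ∀ k, Y k = if k = (⟨0, hg⟩ : Fin g) then fromBlocks (X k) 0 0 D
      else fromBlocks (X k) 0 0 0) :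
    IsUnit S ∧ (∀ k, (Y k).IsHermitian) ∧ S * Sᴴ + ∑ k, Y k * Y k = 1 := by
  have horth : T * Bᴴ + A * Cᴴ = 0 := by
    rw [hB, mul_neg, ← mul_assoc, ← mul_assoc,
      mul_nonsing_inv T ((isUnit_iff_isUnit_det T).mp hT), one_mul, neg_add_cancel]
  have hYsq : ∀ k, Y k * Y k
      = fromBlocks (X k * X k) 0 0 (if k = ⟨0, hg⟩ then D * D else 0) := by
    intro k
    rw [hY k]
    split_ifs <;> simp [fromBlocks_multiply]
  refine ⟨hS ▸ isUnit_fromBlocks_of_orthogonal hT hC.isUnit horth, fun k => ?_, ?_⟩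
  · rw [hY k]
    split_ifs
    exacts [(hXsa k).fromBlocks (by simp) hD.isHermitian,
      (hXsa k).fromBlocks (by simp) isHermitian_zero]
  · rw [hS, fromBlocks_mul_conjTranspose_self_of_orthogonal horth,
      Finset.sum_congr rfl fun k _ => hYsq k, sum_fromBlocks, fromBlocks_add, Finset.sum_ite_eq',
      if_pos (Finset.mem_univ _), hDsq]
    simp only [Finset.sum_const_zero, add_zero, add_right_comm _ (A * Aᴴ), hA, sub_add_cancel,
      add_sub_cancel, fromBlocks_one]

/-- Corollary 2.10 (dilation construction): a strictly contractive tuple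
`(T, X₁, …, X_g)` with `T` invertible dilates to a tuple `(S, Y₁, …, Y_g)` with
`S` invertible and `S S* + ∑ Yₖ² = I`. -/
theorem stmt_7 (n g : ℕ) (hg : 1 ≤ g) (ε : ℝ) (hε0 : 0 < ε) (hε1 : ε < 1)
    (T : Matrix (Fin n) (Fin n) ℂ) (X : Fin g → Matrix (Fin n) (Fin n) ℂ)
    (hXsa : ∀ k, (X k).IsHermitian) (hT : IsUnit T)
    (hcontr : (((1 - ε : ℝ) : ℂ) • 1 - (T * Tᴴ + ∑ k, X k * X k)).PosSemidef)
    (A : Matrix (Fin n) (Fin n) ℂ)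
    (hA : T * Tᴴ + ∑ k, X k * X k = 1 - A * Aᴴ)
    (C : Matrix (Fin n) (Fin n) ℂ) (hC : C.PosDef)
    (B : Matrix (Fin n) (Fin n) ℂ) (hB : Bᴴ = -(T⁻¹ * A * Cᴴ))
    (hBC : (1 - (B * Bᴴ + C * Cᴴ)).PosSemidef)
    (D : Matrix (Fin n) (Fin n) ℂ) (hD : D.PosSemidef)
    (hDsq : D * D = 1 - (B * Bᴴ + C * Cᴴ))
    (S : Matrix (Fin n ⊕ Fin n) (Fin n ⊕ Fin n) ℂ)
    (hS : S = fromBlocks T A B C)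
    (Y : Fin g → Matrix (Fin n ⊕ Fin n) (Fin n ⊕ Fin n) ℂ)
    (hY : ∀ k, Y k = if k = (⟨0, hg⟩ : Fin g) then fromBlocks (X k) 0 0 D
      else fromBlocks (X k) 0 0 0) :
    IsUnit S ∧ (∀ k, (Y k).IsHermitian) ∧ S * Sᴴ + ∑ k, Y k * Y k = 1 :=
  stmt_7_general n g hg T X hXsa hT A hA C hC B hB D hD hDsq S hS Y hY
end

section
/- Fix 1 < p < 2 and let K_p = {(x, y) ∈ ℝ²: |x|^p ≤ y ≤ 1}. Suppose X, Y are 2×2 complex self-adjoint matrices of the form X = [[0, a],[ā, b]], Y = [[0, c],[c̄, d]], such that for every unit vector v ∈ ℂ², (⟨Xv, v⟩, ⟨Yv, v⟩) ∈ K_p. Then a = 0 and c = 0; i.e., the dilation of the point (0,0) is trivial. -/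
/-!
Test the numerical range on the unit vectors `v = (√(1 - t²) u, t)` with `|u| = 1`: the two
quadratic forms become `t (2√(1 - t²) Re(ū a) + b t)` and `t (2√(1 - t²) Re(ū c) + d t)`.
Choosing the phase `u` with `ū c = -|c|`, positivity of the second form gives
`2√(1 - t²) |c| ≤ d t`, so `c = 0` as `t → 0⁺`. Then choosing `ū a = |a|`, the constraint reads
`t^p |2√(1 - t²) |a| + b t|^p ≤ d t²`, i.e. `|2√(1 - t²) |a| + b t|^p ≤ d t^(2 - p)`, and since
`p < 2` the limit `t → 0⁺` gives `(2|a|)^p ≤ 0`.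
-/

open Matrix Filter Topology Set ComplexConjugate

lemma Complex.exists_norm_eq_one_conj_mul_eq_norm (w : ℂ) :
    ∃ u : ℂ, ‖u‖ = 1 ∧ conj u * w = ‖w‖ := by
  refine ⟨Complex.exp (w.arg * Complex.I), by simp, ?_⟩
  conv_lhs => rw [← Complex.norm_mul_exp_arg_mul_I w]
  rw [← Complex.exp_conj, mul_left_comm, ← Complex.exp_add]
  simp

lemma re_star_dotProduct_mulVec_of_topLeft_zero (a : ℂ) (b s t : ℝ) (u : ℂ) :
    (star ![(s : ℂ) * u, t] ⬝ᵥ (!![0, a; conj a, (b : ℂ)] *ᵥ ![(s : ℂ) * u, t])).re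
      = t * (2 * s * (conj u * a).re + b * t) := by
  simp [mulVec, dotProduct, Fin.sum_univ_two, Complex.mul_re]
  ring

lemma star_dotProduct_self_eq_one {u : ℂ} (hu : ‖u‖ = 1) {s t : ℝ} (hst : s ^ 2 + t ^ 2 = 1) :
    star ![(s : ℂ) * u, t] ⬝ᵥ ![(s : ℂ) * u, t] = 1 := by
  have hu' : conj u * u = 1 := by
    rw [mul_comm, Complex.mul_conj, Complex.normSq_eq_norm_sq, hu]; simp
  simp only [dotProduct, Fin.sum_univ_two, cons_val_zero, cons_val_one, Pi.star_apply,
    Complex.star_def, map_mul, Complex.conj_ofReal]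
  linear_combination (s : ℂ) ^ 2 * hu' + (by exact_mod_cast hst : (s : ℂ) ^ 2 + (t : ℂ) ^ 2 = 1)

lemma abs_mul_rpow_le_mul_of_forall_unit {p : ℝ} {a c : ℂ} {b d : ℝ}
    (h : ∀ v : Fin 2 → ℂ, star v ⬝ᵥ v = 1 →
      |(star v ⬝ᵥ (!![0, a; conj a, (b : ℂ)] *ᵥ v)).re| ^ p
        ≤ (star v ⬝ᵥ (!![0, c; conj c, (d : ℂ)] *ᵥ v)).re)
    (u : ℂ) (hu : ‖u‖ = 1) (t : ℝ) (ht : t ^ 2 ≤ 1) :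
    |t * (2 * √(1 - t ^ 2) * (conj u * a).re + b * t)| ^ p
      ≤ t * (2 * √(1 - t ^ 2) * (conj u * c).re + d * t) := by
  have hst : √(1 - t ^ 2) ^ 2 + t ^ 2 = 1 := by
    rw [Real.sq_sqrt (by linarith)]; ring
  simpa only [re_star_dotProduct_mulVec_of_topLeft_zero] using
    h _ (star_dotProduct_self_eq_one hu hst)

lemma eq_zero_of_rpow_mul_le_mul_sq {f : ℝ → ℝ} {L d q : ℝ} (hf : Tendsto f (𝓝[>] 0) (𝓝 L))
    (hq0 : 0 < q) (hq2 : q < 2) (h : ∀ᶠ t in 𝓝[>] 0, (t * |f t|) ^ q ≤ d * t ^ 2) : L = 0 := by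
  have hbound : ∀ᶠ t in 𝓝[>] 0, |f t| ^ q ≤ d * t ^ (2 - q) := by
    filter_upwards [h, self_mem_nhdsWithin] with t ht (htpos : 0 < t)
    have hsplit : t ^ (2 : ℕ) = t ^ q * t ^ (2 - q) := by
      rw [← Real.rpow_add htpos, add_sub_cancel, ← Real.rpow_natCast]; norm_num
    rw [Real.mul_rpow htpos.le (abs_nonneg _), hsplit, mul_left_comm] at ht
    exact le_of_mul_le_mul_left ht (Real.rpow_pos_of_pos htpos q)
  have hlhs : Tendsto (fun t => |f t| ^ q) (𝓝[>] 0) (𝓝 (|L| ^ q)) :=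
    hf.abs.rpow_const (Or.inr hq0.le)
  have hrhs : Tendsto (fun t : ℝ => d * t ^ (2 - q)) (𝓝[>] 0) (𝓝 0) := by
    have : Tendsto (fun t : ℝ => t ^ (2 - q)) (𝓝[>] 0) (𝓝 0) := by
      have hcont := (Real.continuousAt_rpow_const 0 (2 - q) (Or.inr (by linarith))).tendsto
      rw [Real.zero_rpow (by linarith)] at hcont
      exact hcont.mono_left nhdsWithin_le_nhds
    simpa using this.const_mul d
  have hLq : |L| ^ q ≤ 0 := le_of_tendsto_of_tendsto hlhs hrhs hbound
  by_contra hL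
  exact (Real.rpow_pos_of_pos (abs_pos.mpr hL) q).not_ge hLq

lemma tendsto_two_mul_sqrt_one_sub_sq_mul_add (r b : ℝ) :
    Tendsto (fun t : ℝ => 2 * √(1 - t ^ 2) * r + b * t) (𝓝[>] 0) (𝓝 (2 * r)) := by
  have hcont : Continuous (fun t : ℝ => 2 * √(1 - t ^ 2) * r + b * t) := by fun_prop
  simpa using (hcont.tendsto 0).mono_left nhdsWithin_le_nhds

/-- Example 3.9: for `1 < p < 2`, any `2 × 2` self-adjoint dilation `(X, Y)` of the
point `(0,0)` whose joint numerical range lies in `K_p = {(x,y) : |x|^p ≤ y ≤ 1}`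
is trivial: `a = 0` and `c = 0`. -/
theorem stmt_9 (p : ℝ) (hp1 : 1 < p) (hp2 : p < 2)
    (a c : ℂ) (b d : ℝ)
    (X Y : Matrix (Fin 2) (Fin 2) ℂ)
    (hX : X = !![0, a; (starRingEnd ℂ) a, (b : ℂ)])
    (hY : Y = !![0, c; (starRingEnd ℂ) c, (d : ℂ)])
    (hnr : ∀ v : Fin 2 → ℂ, dotProduct (star v) v = 1 →
      |(dotProduct (star v) (X *ᵥ v)).re| ^ p ≤ (dotProduct (star v) (Y *ᵥ v)).re ∧
        (dotProduct (star v) (Y *ᵥ v)).re ≤ 1) :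
    a = 0 ∧ c = 0 := by
  subst hX hY
  have hform := fun u hu t (ht : t ∈ Ioo (0 : ℝ) 1) =>
    abs_mul_rpow_le_mul_of_forall_unit (fun v hv => (hnr v hv).1) u hu t
      (by nlinarith [ht.1, ht.2])
  have hnear : ∀ᶠ t in 𝓝[>] (0 : ℝ), t ∈ Ioo (0 : ℝ) 1 := Ioo_mem_nhdsGT zero_lt_one
  have hc : c = 0 := by
    obtain ⟨u, hu, huc⟩ := Complex.exists_norm_eq_one_conj_mul_eq_norm (-c)
    have hre : (conj u * c).re = -‖c‖ := by
      rw [mul_neg, norm_neg] at huc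
      simp [neg_eq_iff_eq_neg.mp huc]
    have h2c := eq_zero_of_rpow_mul_le_mul_sq (d := d)
      (tendsto_two_mul_sqrt_one_sub_sq_mul_add ‖c‖ 0) one_pos one_lt_two <| by
        filter_upwards [hnear] with t ht
        have := (Real.rpow_nonneg (abs_nonneg _) p).trans (hform u hu t ht)
        rw [hre] at this
        rw [Real.rpow_one, zero_mul, add_zero, abs_of_nonneg (by positivity)]
        nlinarith [ht.1]
    simpa using h2c
  subst hc
  obtain ⟨u, hu, hua⟩ := Complex.exists_norm_eq_one_conj_mul_eq_norm a
  have h2a := eq_zero_of_rpow_mul_le_mul_sq (d := d)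
    (tendsto_two_mul_sqrt_one_sub_sq_mul_add ‖a‖ b) (by linarith) hp2 <| by
      filter_upwards [hnear] with t ht
      have := hform u hu t ht
      rw [hua, Complex.ofReal_re, mul_zero, Complex.zero_re, mul_zero, zero_add, abs_mul,
        abs_of_pos ht.1] at this
      linarith
  simpa using h2a
end

section
/- Let g ≥ 2 and let X₁, …, X_{g−1}, Y be 2×2 complex matrices with each Xᵢ self-adjoint and Y self-adjoint positive semidefinite, all with (1,1)-entry equal to 0, and with some Xᵢ having nonzero off-diagonal entry a_i ≠ 0. Write Xᵢ = [[0, aᵢ],[āᵢ, bᵢ]] and Y = [[0, 0],[0, β]] (the (1,2)-entry of Y is forced to be 0 by positivity). Let F: D → [0, ∞) be a function on a neighborhood D of 0 in ℝ^{g−1} with F(x) ≤ ⟨Yv, v⟩ whenever x = (⟨X₁v, v⟩, …, ⟨X_{g−1}v, v⟩) ∈ D for a unit vector v ∈ ℂ². Then liminf_{x → 0} F(x)/‖x‖² < +∞. -/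
open Matrix Filter
open scoped Topology

/-! Along the unit vectors `v(t) = (cos t, sin t · u)`, where the phase `u` makes
`a i₀ · u = ‖a i₀‖`, the states are `x_i(t) = sin t (2 cos t Re (a i u) + b i sin t)` and
`⟨Y v, v⟩ = β sin² t`. For small `t > 0` the coordinate `x_{i₀}(t)` dominates `‖a i₀‖ sin t`,
so `x(t) → 0` through nonzero points with `F (x t) / ‖x t‖² ≤ β / ‖a i₀‖²`. -/

theorem Complex.exists_norm_eq_one_mul_eq_norm (A : ℂ) : ∃ u : ℂ, ‖u‖ = 1 ∧ A * u = ‖A‖ := by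
  refine ⟨exp (-(arg A : ℂ) * I), by rw [← ofReal_neg]; exact norm_exp_ofReal_mul_I _, ?_⟩
  nth_rw 1 [← norm_mul_exp_arg_mul_I A]
  rw [mul_assoc, ← exp_add, ← add_mul, add_neg_cancel, zero_mul, exp_zero, mul_one]

theorem div_sq_le_div_sq {F x β c s : ℝ} (hβ : 0 ≤ β) (hF : F ≤ β * s ^ 2) (hcs : 0 < c * s)
    (hx : c * s ≤ x) : F / x ^ 2 ≤ β / c ^ 2 :=
  calc F / x ^ 2 ≤ β * s ^ 2 / x ^ 2 := by gcongr
    _ ≤ β * s ^ 2 / (c * s) ^ 2 := by gcongr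
    _ = β / c ^ 2 := by
      have hs : s ≠ 0 := right_ne_zero_of_mul hcs.ne'
      field_simp

theorem eventually_mul_sin_le_sin_mul {c : ℝ} (hc : 0 < c) (b : ℝ) :
    ∀ᶠ t in 𝓝[>] 0, 0 < c * Real.sin t ∧
      c * Real.sin t ≤ Real.sin t * (2 * Real.cos t * c + b * Real.sin t) := by
  have hfactor : ∀ᶠ t in 𝓝 0, c < 2 * Real.cos t * c + b * Real.sin t := by
    have hcont : Continuous fun t => 2 * Real.cos t * c + b * Real.sin t := by fun_prop
    exact (hcont.tendsto 0).eventually_const_lt (by simpa [two_mul] using hc)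
  filter_upwards [Ioo_mem_nhdsGT Real.pi_pos, nhdsWithin_le_nhds hfactor] with t ht hf
  have hs : 0 < Real.sin t := Real.sin_pos_of_pos_of_lt_pi ht.1 ht.2
  exact ⟨mul_pos hc hs, by nlinarith⟩

theorem re_star_dotProduct_mulVec_fin_two (A z w : ℂ) (B : ℝ) :
    (star ![z, w] ⬝ᵥ (!![0, A; (starRingEnd ℂ) A, (B : ℂ)] *ᵥ ![z, w])).re
      = 2 * ((starRingEnd ℂ) z * A * w).re + B * Complex.normSq w := by
  simp only [dotProduct, mulVec, Fin.sum_univ_two, Pi.star_apply, Matrix.of_apply,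
    Matrix.cons_val_zero, Matrix.cons_val_one, Matrix.cons_val', Matrix.empty_val',
    Matrix.cons_val_fin_one, RCLike.star_def, Complex.add_re, Complex.add_im,
    Complex.mul_re, Complex.mul_im, Complex.conj_re, Complex.conj_im,
    Complex.ofReal_re, Complex.ofReal_im, Complex.zero_re, Complex.zero_im, Complex.normSq_apply]
  ring

theorem star_dotProduct_fin_two (z w : ℂ) :
    star ![z, w] ⬝ᵥ ![z, w] = (Complex.normSq z + Complex.normSq w : ℝ) := by
  simp only [dotProduct, Fin.sum_univ_two, Pi.star_apply, Matrix.cons_val_zero,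
    Matrix.cons_val_one, RCLike.star_def, Complex.conj_mul']
  push_cast [Complex.normSq_eq_norm_sq]
  ring

noncomputable def rotationPath (u : ℂ) (t : ℝ) : Fin 2 → ℂ :=
  ![(Real.cos t : ℂ), Real.sin t * u]

section rotationPath

variable {u : ℂ} (t : ℝ)

theorem star_dotProduct_rotationPath (hu : ‖u‖ = 1) :
    star (rotationPath u t) ⬝ᵥ rotationPath u t = 1 := by
  rw [rotationPath, star_dotProduct_fin_two, Complex.normSq_ofReal, Complex.normSq_mul,
    Complex.normSq_ofReal, Complex.normSq_eq_norm_sq u, hu]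
  norm_num [← sq, Real.cos_sq_add_sin_sq]

theorem re_star_dotProduct_mulVec_rotationPath (hu : ‖u‖ = 1) (A : ℂ) (B : ℝ) :
    (star (rotationPath u t) ⬝ᵥ (!![0, A; (starRingEnd ℂ) A, (B : ℂ)] *ᵥ rotationPath u t)).re
      = Real.sin t * (2 * Real.cos t * (A * u).re + B * Real.sin t) := by
  rw [rotationPath, re_star_dotProduct_mulVec_fin_two, Complex.conj_ofReal,
    Complex.normSq_mul, Complex.normSq_ofReal, Complex.normSq_eq_norm_sq u, hu,
    show (Real.cos t : ℂ) * A * (Real.sin t * u) = (Real.cos t * Real.sin t : ℝ) * (A * u) by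
      push_cast; ring, Complex.re_ofReal_mul]
  ring

end rotationPath

theorem stmt_11_general (g : ℕ)
    (a : Fin (g - 1) → ℂ) (b : Fin (g - 1) → ℝ) (β : ℝ) (hβ : 0 ≤ β)
    (i₀ : Fin (g - 1)) (ha : a i₀ ≠ 0)
    (X : Fin (g - 1) → Matrix (Fin 2) (Fin 2) ℂ)
    (hX : ∀ i, X i = !![0, a i; (starRingEnd ℂ) (a i), (b i : ℂ)])
    (Y : Matrix (Fin 2) (Fin 2) ℂ) (hYdef : Y = !![0, 0; 0, (β : ℂ)])
    (D : Set (EuclideanSpace ℝ (Fin (g - 1)))) (hD : D ∈ 𝓝 (0 : EuclideanSpace ℝ (Fin (g - 1))))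
    (F : EuclideanSpace ℝ (Fin (g - 1)) → ℝ)
    (hF : ∀ v : Fin 2 → ℂ, dotProduct (star v) v = 1 →
      ∀ hx : (show EuclideanSpace ℝ (Fin (g - 1)) from
          WithLp.toLp 2 (fun i => (dotProduct (star v) ((X i) *ᵥ v)).re)) ∈ D,
        F (show EuclideanSpace ℝ (Fin (g - 1)) from
          WithLp.toLp 2 (fun i => (dotProduct (star v) ((X i) *ᵥ v)).re)) ≤
          (dotProduct (star v) (Y *ᵥ v)).re) :
    ∃ C : ℝ, ∃ᶠ x in 𝓝[≠] (0 : EuclideanSpace ℝ (Fin (g - 1))), F x / ‖x‖ ^ 2 ≤ C := by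
  obtain ⟨u, hu, hau⟩ := Complex.exists_norm_eq_one_mul_eq_norm (a i₀)
  set c := ‖a i₀‖
  have hc : 0 < c := norm_pos_iff.mpr ha
  set φ : ℝ → EuclideanSpace ℝ (Fin (g - 1)) := fun t =>
    WithLp.toLp 2 fun i => Real.sin t * (2 * Real.cos t * (a i * u).re + b i * Real.sin t)
  have hXφ (t : ℝ) : (WithLp.toLp 2 fun i =>
      (star (rotationPath u t) ⬝ᵥ (X i *ᵥ rotationPath u t)).re : EuclideanSpace ℝ _) = φ t := by
    congr 1
    funext i
    rw [hX i, re_star_dotProduct_mulVec_rotationPath t hu]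
  have hY (t : ℝ) : (star (rotationPath u t) ⬝ᵥ (Y *ᵥ rotationPath u t)).re
      = β * Real.sin t ^ 2 := by
    simpa [hYdef, sq, mul_left_comm] using re_star_dotProduct_mulVec_rotationPath t hu 0 β
  have hφ : Tendsto φ (𝓝[>] 0) (𝓝 0) := by
    have hcont : Continuous φ :=
      (PiLp.continuous_toLp 2 _).comp (continuous_pi fun i => by fun_prop)
    have h0 : φ 0 = 0 := by ext i; simp [φ]
    exact h0 ▸ (hcont.tendsto 0).mono_left nhdsWithin_le_nhds
  have hlow : ∀ᶠ t in 𝓝[>] 0, 0 < c * Real.sin t ∧ c * Real.sin t ≤ ‖φ t‖ := by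
    filter_upwards [eventually_mul_sin_le_sin_mul hc (b i₀)] with t ⟨hpos, hle⟩
    refine ⟨hpos, hle.trans ?_⟩
    have hφi₀ : φ t i₀ = Real.sin t * (2 * Real.cos t * c + b i₀ * Real.sin t) := by
      simp only [φ, hau, Complex.ofReal_re]
    exact hφi₀ ▸ (le_abs_self _).trans (PiLp.norm_apply_le (φ t) i₀)
  refine ⟨β / c ^ 2, (tendsto_nhdsWithin_iff.mpr ⟨hφ, ?_⟩).frequently (Eventually.frequently ?_)⟩
  · filter_upwards [hlow] with t ⟨hpos, hle⟩
    exact norm_pos_iff.mp (hpos.trans_le hle)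
  · filter_upwards [hlow, hφ.eventually_mem hD] with t ⟨hpos, hle⟩ hmem
    have hFt := hF _ (star_dotProduct_rotationPath t hu) (by rwa [hXφ t])
    rw [hXφ t, hY t] at hFt
    exact div_sq_le_div_sq hβ hFt hpos hle

/-- Theorem 3.10 (contrapositive core): a nontrivial self-adjoint `2 × 2` dilation
of `0` whose vector states obey `F(x) ≤ ⟨Yv, v⟩` forces
`liminf_{x → 0} F(x)/‖x‖² < ∞`, expressed as a frequently-bounded statement. -/
theorem stmt_11 (g : ℕ) (hg : 2 ≤ g)
    (a : Fin (g - 1) → ℂ) (b : Fin (g - 1) → ℝ) (β : ℝ) (hβ : 0 ≤ β)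
    (i₀ : Fin (g - 1)) (ha : a i₀ ≠ 0)
    (X : Fin (g - 1) → Matrix (Fin 2) (Fin 2) ℂ)
    (hX : ∀ i, X i = !![0, a i; (starRingEnd ℂ) (a i), (b i : ℂ)])
    (Y : Matrix (Fin 2) (Fin 2) ℂ) (hYdef : Y = !![0, 0; 0, (β : ℂ)])
    (D : Set (EuclideanSpace ℝ (Fin (g - 1)))) (hD : D ∈ 𝓝 (0 : EuclideanSpace ℝ (Fin (g - 1))))
    (F : EuclideanSpace ℝ (Fin (g - 1)) → ℝ) (hF0 : ∀ x ∈ D, 0 ≤ F x)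
    (hF : ∀ v : Fin 2 → ℂ, dotProduct (star v) v = 1 →
      ∀ hx : (show EuclideanSpace ℝ (Fin (g - 1)) from
          WithLp.toLp 2 (fun i => (dotProduct (star v) ((X i) *ᵥ v)).re)) ∈ D,
        F (show EuclideanSpace ℝ (Fin (g - 1)) from
          WithLp.toLp 2 (fun i => (dotProduct (star v) ((X i) *ᵥ v)).re)) ≤
          (dotProduct (star v) (Y *ᵥ v)).re) :
    ∃ C : ℝ, ∃ᶠ x in 𝓝[≠] (0 : EuclideanSpace ℝ (Fin (g - 1))), F x / ‖x‖ ^ 2 ≤ C :=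
  stmt_11_general g a b β hβ i₀ ha X hX Y hYdef D hD F hF
end

section
/- Let A₁, …, A_g be self-adjoint n×n complex matrices with A_g = [[0, 0],[0, D]] in block form where D is positive definite with D ≥ εI (ε > 0), and Aᵢ = [[0, Bᵢ],[Bᵢ*, Cᵢ]] for 1 ≤ i ≤ g−1 (zero upper-left block). Then there is a constant M > 0, namely M⁻¹ = Σ_{i=1}^{g−1} (2‖Bᵢ‖ + ‖Cᵢ‖)²/ε, such that for every unit vector v ∈ ℂⁿ, the point x = (⟨A₁v, v⟩, …, ⟨A_gv, v⟩) satisfies x_g ≥ M · Σ_{i=1}^{g−1} xᵢ². -/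
open Matrix
open scoped ComplexOrder

/-!
Split `v = (x, y)` along `ℂᵏ ⊕ ℂᵐ`. Since the upper-left blocks vanish, every term of
`xᵢ = ⟨Aᵢ v, v⟩` contains a factor `y`, so `|xᵢ| ≤ (2‖Bᵢ‖ + ‖Cᵢ‖) ‖y‖` for a unit vector `v`,
while `x_g = ⟨D y, y⟩ ≥ ε ‖y‖²`. Eliminating `‖y‖` gives the paraboloid bound with
`M = ε / (∑ᵢ (2‖Bᵢ‖ + ‖Cᵢ‖)² + 1)`, where the `+ 1` keeps `M` finite when the sum vanishes.
-/

open WithLp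
open scoped Matrix.Norms.L2Operator

lemma mul_sum_sq_le_of_abs_le {ι : Type*} [Fintype ι] {ε t z : ℝ} (hε : 0 ≤ ε)
    (x K : ι → ℝ) (hx : ∀ i, |x i| ≤ K i * t) (hz : ε * t ^ 2 ≤ z) :
    ε / (∑ i, K i ^ 2 + 1) * ∑ i, x i ^ 2 ≤ z := by
  set S := ∑ i, K i ^ 2
  have hS : 0 ≤ S := by positivity
  have hsum : ∑ i, x i ^ 2 ≤ S * t ^ 2 := by
    rw [Finset.sum_mul]
    refine Finset.sum_le_sum fun i _ => ?_
    rw [← sq_abs, ← mul_pow]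
    exact pow_le_pow_left₀ (abs_nonneg _) (hx i) 2
  calc ε / (S + 1) * ∑ i, x i ^ 2 ≤ ε / (S + 1) * (S * t ^ 2) := by gcongr
    _ = ε * t ^ 2 * (S / (S + 1)) := by ring
    _ ≤ ε * t ^ 2 * 1 := by
        gcongr
        rw [div_le_one (by positivity)]
        linarith
    _ ≤ z := by linarith

namespace Matrix

section Blocks

variable {l n α : Type*} [Fintype l] [Fintype n] [NonUnitalNonAssocSemiring α] [Star α]

lemma star_sumElim_dotProduct_fromBlocks_mulVec (P : Matrix l l α) (Q : Matrix l n α)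
    (R : Matrix n l α) (S : Matrix n n α) (x : l → α) (y : n → α) :
    star (Sum.elim x y) ⬝ᵥ (fromBlocks P Q R S *ᵥ Sum.elim x y) =
      star x ⬝ᵥ (P *ᵥ x) + star x ⬝ᵥ (Q *ᵥ y) + (star y ⬝ᵥ (R *ᵥ x) + star y ⬝ᵥ (S *ᵥ y)) := by
  rw [Function.star_sumElim, fromBlocks_mulVec, sumElim_dotProduct_sumElim, dotProduct_add,
    dotProduct_add, Sum.elim_comp_inl, Sum.elim_comp_inr]

end Blocks

variable {𝕜 l n : Type*} [RCLike 𝕜] [Fintype l] [Fintype n]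

lemma star_dotProduct_self_eq_norm_sq (x : n → 𝕜) :
    star x ⬝ᵥ x = (‖toLp 2 x‖ : 𝕜) ^ 2 := by
  rw [dotProduct_comm, ← EuclideanSpace.inner_toLp_toLp, inner_self_eq_norm_sq_to_K]

lemma norm_star_dotProduct_mulVec_le [DecidableEq n] (M : Matrix l n 𝕜) (w : l → 𝕜) (u : n → 𝕜) :
    ‖star w ⬝ᵥ (M *ᵥ u)‖ ≤ ‖toLp 2 w‖ * (‖M‖ * ‖toLp 2 u‖) := by
  rw [dotProduct_comm, ← EuclideanSpace.inner_toLp_toLp]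
  exact (norm_inner_le_norm _ _).trans (by gcongr; exact M.l2_opNorm_mulVec (toLp 2 u))

lemma norm_star_sumElim_dotProduct_fromBlocks_zero_mulVec_le [DecidableEq l] [DecidableEq n]
    (B : Matrix l n 𝕜) (C : Matrix n n 𝕜) {x : l → 𝕜} {y : n → 𝕜}
    (hx : ‖toLp 2 x‖ ≤ 1) (hy : ‖toLp 2 y‖ ≤ 1) :
    ‖star (Sum.elim x y) ⬝ᵥ (fromBlocks 0 B Bᴴ C *ᵥ Sum.elim x y)‖ ≤
      (2 * ‖B‖ + ‖C‖) * ‖toLp 2 y‖ := by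
  rw [star_sumElim_dotProduct_fromBlocks_mulVec, zero_mulVec, dotProduct_zero, zero_add]
  have hxB : ‖star x ⬝ᵥ (B *ᵥ y)‖ ≤ ‖B‖ * ‖toLp 2 y‖ :=
    (norm_star_dotProduct_mulVec_le B x y).trans (mul_le_of_le_one_left (by positivity) hx)
  have hyB : ‖star y ⬝ᵥ (Bᴴ *ᵥ x)‖ ≤ ‖B‖ * ‖toLp 2 y‖ := by
    refine (norm_star_dotProduct_mulVec_le Bᴴ y x).trans ?_
    rw [l2_opNorm_conjTranspose, mul_comm]
    exact mul_le_mul_of_nonneg_right (mul_le_of_le_one_right (norm_nonneg B) hx) (by positivity)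
  have hyC : ‖star y ⬝ᵥ (C *ᵥ y)‖ ≤ ‖C‖ * ‖toLp 2 y‖ :=
    (norm_star_dotProduct_mulVec_le C y y).trans (mul_le_of_le_one_left (by positivity) hy)
  refine (norm_add_le _ _).trans ((add_le_add_right (norm_add_le _ _) _).trans ?_)
  linarith

lemma PosSemidef.mul_norm_sq_le_re_star_dotProduct_mulVec [DecidableEq n] {D : Matrix n n 𝕜}
    {ε : ℝ} (hD : (D - (ε : 𝕜) • 1).PosSemidef) (y : n → 𝕜) :
    ε * ‖toLp 2 y‖ ^ 2 ≤ RCLike.re (star y ⬝ᵥ (D *ᵥ y)) := by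
  have h := (RCLike.nonneg_iff.1 (hD.dotProduct_mulVec_nonneg y)).1
  rw [sub_mulVec, smul_mulVec, one_mulVec, dotProduct_sub, dotProduct_smul,
    star_dotProduct_self_eq_norm_sq] at h
  simpa [sub_nonneg] using h

end Matrix

theorem stmt_12_general (k m g : ℕ) (ε : ℝ) (hε : 0 < ε)
    (B : Fin (g - 1) → Matrix (Fin k) (Fin m) ℂ)
    (C : Fin (g - 1) → Matrix (Fin m) (Fin m) ℂ)
    (D : Matrix (Fin m) (Fin m) ℂ)
    (hDε : (D - (ε : ℂ) • 1).PosSemidef)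
    (A : Fin (g - 1) → Matrix (Fin k ⊕ Fin m) (Fin k ⊕ Fin m) ℂ)
    (hA : ∀ i, A i = fromBlocks 0 (B i) (B i)ᴴ (C i))
    (Ag : Matrix (Fin k ⊕ Fin m) (Fin k ⊕ Fin m) ℂ)
    (hAg : Ag = fromBlocks 0 0 0 D) :
    ∃ M : ℝ, 0 < M ∧ ∀ v : (Fin k ⊕ Fin m) → ℂ, dotProduct (star v) v = 1 →
      M * ∑ i, ((dotProduct (star v) ((A i) *ᵥ v)).re) ^ 2 ≤
        (dotProduct (star v) (Ag *ᵥ v)).re := by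
  refine ⟨ε / (∑ i, (2 * ‖B i‖ + ‖C i‖) ^ 2 + 1), by positivity, fun v hv => ?_⟩
  obtain ⟨x, y, rfl⟩ : ∃ x y, v = Sum.elim x y :=
    ⟨v ∘ Sum.inl, v ∘ Sum.inr, (Sum.elim_comp_inl_inr v).symm⟩
  have hunit : ‖toLp 2 x‖ ^ 2 + ‖toLp 2 y‖ ^ 2 = 1 := by
    rw [Function.star_sumElim, sumElim_dotProduct_sumElim, star_dotProduct_self_eq_norm_sq,
      star_dotProduct_self_eq_norm_sq] at hv
    exact RCLike.ofReal_injective (K := ℂ) (by push_cast; exact hv)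
  have hx : ‖toLp 2 x‖ ≤ 1 := (sq_le_one_iff₀ (norm_nonneg _)).1 (by nlinarith)
  have hy : ‖toLp 2 y‖ ≤ 1 := (sq_le_one_iff₀ (norm_nonneg _)).1 (by nlinarith)
  refine mul_sum_sq_le_of_abs_le (t := ‖toLp 2 y‖) hε.le _ _ (fun i => ?_) ?_
  · rw [hA i]
    exact (Complex.abs_re_le_norm _).trans
      (norm_star_sumElim_dotProduct_fromBlocks_zero_mulVec_le _ _ hx hy)
  · rw [hAg, star_sumElim_dotProduct_fromBlocks_mulVec]
    simpa using hDε.mul_norm_sq_le_re_star_dotProduct_mulVec y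

/-- Theorem 3.11 (main estimate): for a self-adjoint tuple with the indicated block
structure (`A_g = [[0,0],[0,D]]`, `D ≥ εI`, zero upper-left blocks), the joint
numerical range lies in a paraboloid `x_g ≥ M ∑ xᵢ²`. -/
theorem stmt_12 (k m g : ℕ) (hg : 1 ≤ g) (ε : ℝ) (hε : 0 < ε)
    (B : Fin (g - 1) → Matrix (Fin k) (Fin m) ℂ)
    (C : Fin (g - 1) → Matrix (Fin m) (Fin m) ℂ)
    (hCsa : ∀ i, (C i).IsHermitian)
    (D : Matrix (Fin m) (Fin m) ℂ) (hD : D.PosDef)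
    (hDε : (D - (ε : ℂ) • 1).PosSemidef)
    (A : Fin (g - 1) → Matrix (Fin k ⊕ Fin m) (Fin k ⊕ Fin m) ℂ)
    (hA : ∀ i, A i = fromBlocks 0 (B i) (B i)ᴴ (C i))
    (Ag : Matrix (Fin k ⊕ Fin m) (Fin k ⊕ Fin m) ℂ)
    (hAg : Ag = fromBlocks 0 0 0 D) :
    ∃ M : ℝ, 0 < M ∧ ∀ v : (Fin k ⊕ Fin m) → ℂ, dotProduct (star v) v = 1 →
      M * ∑ i, ((dotProduct (star v) ((A i) *ᵥ v)).re) ^ 2 ≤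
        (dotProduct (star v) (Ag *ᵥ v)).re :=
  stmt_12_general k m g ε hε B C D hDε A hA Ag hAg
end

section
/- Fix p ∈ (1, 2). For all sufficiently small c > 0, setting r = c − (pc)^{p/(2−p)}, we have 0 < r < c, c + r < 1, and the closed disk of radius r centered at (0, c) is contained in K_p = {(x, y) ∈ ℝ²: |x|^p ≤ y ≤ 1}. -/
/-!
Write `s = p / (2 - p) > 1` and `δ = (p c) ^ s`; then `δ < c` for small `c` because `s > 1`.
A point `(x, y)` of the disk has `y ≥ δ` and `x² ≤ (c - δ)² - (y - c)² ≤ 2c (y - δ)`.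
Since `y ↦ y ^ (2/p)` is convex, it lies above its tangent at `δ`, whose slope
`(2/p) δ ^ (2/p - 1)` is exactly `2c` by the choice of `δ`; hence `x² ≤ y ^ (2/p)`,
i.e. `|x| ^ p ≤ y`.
-/

open Filter Topology

lemma Real.rpow_add_mul_sub_le_rpow {q a y : ℝ} (hq : 1 ≤ q) (ha : 0 < a) (hy : 0 ≤ y) :
    a ^ q + q * a ^ (q - 1) * (y - a) ≤ y ^ q := by
  have hbernoulli := one_add_mul_self_le_rpow_one_add (s := (y - a) / a)
    (by rw [le_div_iff₀ ha]; linarith) hq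
  rw [show 1 + (y - a) / a = y / a by field_simp; ring, Real.div_rpow hy ha.le,
    le_div_iff₀ (by positivity)] at hbernoulli
  rw [Real.rpow_sub_one ha.ne']
  calc a ^ q + q * (a ^ q / a) * (y - a) = (1 + q * ((y - a) / a)) * a ^ q := by ring
    _ ≤ y ^ q := hbernoulli

lemma mem_Icc_of_sq_add_sq_le {x y c r : ℝ} (hr : 0 ≤ r) (h : x ^ 2 + (y - c) ^ 2 ≤ r ^ 2) :
    y ∈ Set.Icc (c - r) (c + r) := by
  have := abs_le_of_sq_le_sq' (a := y - c) (by nlinarith [sq_nonneg x]) hr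
  constructor <;> linarith

lemma sq_le_rpow_of_sq_add_sq_le {q c δ x y : ℝ} (hq : 1 ≤ q) (hδ : 0 < δ) (hδc : δ ≤ c)
    (hslope : q * δ ^ (q - 1) = 2 * c) (hxy : x ^ 2 + (y - c) ^ 2 ≤ (c - δ) ^ 2) :
    x ^ 2 ≤ y ^ q := by
  have hyδ : δ ≤ y := by
    have := (mem_Icc_of_sq_add_sq_le (sub_nonneg.mpr hδc) hxy).1
    linarith
  have htangent := Real.rpow_add_mul_sub_le_rpow hq hδ (hδ.le.trans hyδ)
  rw [hslope] at htangent
  have : 0 < δ ^ q := by positivity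
  nlinarith

lemma two_div_mul_rpow_two_div_sub_one {p c : ℝ} (hp : 0 < p) (hp2 : p < 2) (hc : 0 < c) :
    2 / p * ((p * c) ^ (p / (2 - p))) ^ (2 / p - 1) = 2 * c := by
  have : 2 - p ≠ 0 := by linarith
  rw [← Real.rpow_mul (by positivity),
    show p / (2 - p) * (2 / p - 1) = 1 by field_simp, Real.rpow_one]
  field_simp

lemma abs_rpow_le_of_sq_le_rpow {p x y : ℝ} (hp : 0 < p) (hy : 0 ≤ y)
    (h : x ^ 2 ≤ y ^ (2 / p)) : |x| ^ p ≤ y := by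
  have := Real.rpow_le_rpow (sq_nonneg x) h (by positivity : 0 ≤ p / 2)
  rwa [← Real.rpow_mul hy, show 2 / p * (p / 2) = 1 by field_simp, Real.rpow_one, ← sq_abs,
    ← Real.rpow_natCast, ← Real.rpow_mul (abs_nonneg x), Nat.cast_ofNat,
    mul_div_cancel₀ _ two_ne_zero] at this

lemma eventually_mul_rpow_lt_self {a s : ℝ} (ha : 0 ≤ a) (hs : 1 < s) :
    ∀ᶠ c in 𝓝[>] 0, (a * c) ^ s < c := by
  have hlim : Tendsto (fun c : ℝ => a ^ s * c ^ (s - 1)) (𝓝[>] 0) (𝓝 0) := by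
    have : ContinuousAt (fun c : ℝ => a ^ s * c ^ (s - 1)) 0 :=
      continuousAt_const.mul (Real.continuousAt_rpow_const _ _ (Or.inr (by linarith)))
    simpa [Real.zero_rpow (by linarith : s - 1 ≠ 0)] using
      this.tendsto.mono_left nhdsWithin_le_nhds
  filter_upwards [hlim.eventually (gt_mem_nhds one_pos), self_mem_nhdsWithin] with c hc hc0
  calc (a * c) ^ s = a ^ s * c ^ (s - 1) * c := by
        rw [Real.mul_rpow ha hc0.le, mul_assoc, Real.rpow_sub_one hc0.ne',
          div_mul_cancel₀ _ hc0.ne']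
    _ < 1 * c := by gcongr
    _ = c := one_mul c

/-- Lemma 3.12: for `1 < p < 2` and sufficiently small `c > 0`, with
`r = c − (pc)^{p/(2−p)}`, one has `0 < r < c`, `c + r < 1`, and the closed disk of
radius `r` centered at `(0, c)` is contained in `K_p = {(x,y) : |x|^p ≤ y ≤ 1}`. -/
theorem stmt_14 (p : ℝ) (hp1 : 1 < p) (hp2 : p < 2) :
    ∃ c₀ > (0 : ℝ), ∀ c : ℝ, 0 < c → c < c₀ →
      0 < c - (p * c) ^ (p / (2 - p)) ∧
      c - (p * c) ^ (p / (2 - p)) < c ∧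
      c + (c - (p * c) ^ (p / (2 - p))) < 1 ∧
      {q : ℝ × ℝ | q.1 ^ 2 + (q.2 - c) ^ 2 ≤ (c - (p * c) ^ (p / (2 - p))) ^ 2} ⊆
        {q : ℝ × ℝ | |q.1| ^ p ≤ q.2 ∧ q.2 ≤ 1} := by
  have hp0 : 0 < p := by linarith
  have hs : 1 < p / (2 - p) := (one_lt_div (by linarith)).mpr (by linarith)
  have hsmall : ∀ᶠ c in 𝓝[>] 0, c < 1 / 2 ∧ (p * c) ^ (p / (2 - p)) < c :=
    (eventually_lt_nhds (by norm_num : (0 : ℝ) < 1 / 2)).filter_mono nhdsWithin_le_nhds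
      |>.and (eventually_mul_rpow_lt_self hp0.le hs)
  obtain ⟨c₀, hc₀, hsub⟩ := mem_nhdsGT_iff_exists_Ioo_subset.mp hsmall
  refine ⟨c₀, hc₀, fun c hc hcc => ?_⟩
  obtain ⟨hc2, hδc⟩ := hsub ⟨hc, hcc⟩
  set δ := (p * c) ^ (p / (2 - p))
  have hδ : 0 < δ := by positivity
  refine ⟨by linarith, by linarith, by linarith, ?_⟩
  rintro ⟨x, y⟩ hxy
  have hy := mem_Icc_of_sq_add_sq_le (by linarith) hxy
  have hx := sq_le_rpow_of_sq_add_sq_le ((one_le_div hp0).mpr hp2.le) hδ hδc.le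
    (two_div_mul_rpow_two_div_sub_one hp0 hp2 hc) hxy
  exact ⟨abs_rpow_le_of_sq_le_rpow hp0 (by linarith [hy.1]) hx, by linarith [hy.2]⟩
end
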